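/- arXiv:1804.06081 — 6 statements merged into one kernel-verified Lean document; each statement's English description precedes it below -/
import Mathlib

section
/- Let w be a real n×n matrix with I − w invertible, Δ = (I − w)^{-1}, and w⁰, w_g, w_b ∈ ℝⁿ. Define r^(1) = Δᵀ𝟙 and recursively r^(q) = Δᵀ(r^(q−1) ∘ w⁰) for q ≥ 2. Given an initial vector v^(0) = v⁰ ∈ ℝⁿ and per-phase investment vectors x^(q), y^(q) ∈ ℝⁿ for q = 1,…,p, define v^(q) = Δ(w⁰ ∘ v^(q−1) + w_g ∘ x^(q) − w_b ∘ y^(q)). Then for every p ≥ 1: ∑_i v_i^(p) = ∑_i r_i^(p) w⁰_i v⁰_i + ∑_{q=1}^{p} ∑_i r_i^(p−q+1) (w_{g,i} x_i^(q) − w_{b,i} y_i^(q)). -/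
/-!
Pair the opinion vector with a covector `a`. One phase `v ↦ Δ (w⁰ ∘ v + b)` turns
`a ⬝ v^(m+1)` into `((aᵀΔ) ∘ w⁰) ⬝ v^(m) + (aᵀΔ) ⬝ b^(m+1)`, so unrolling all phases from
`a = 𝟙` moves the covector backwards by `a ↦ (aᵀΔ) ∘ w⁰`; its iterates, multiplied by `Δ`,
are exactly the Katz centralities `r^(q)`.
-/

open Matrix Finset

namespace Matrix

variable {ι R : Type*} [Fintype ι]

theorem dotProduct_hadamard_assoc [NonUnitalSemiring R] (a c u : ι → R) :
    a ⬝ᵥ (c * u) = (a * c) ⬝ᵥ u := by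
  simp only [dotProduct, Pi.mul_apply, mul_assoc]

variable [CommSemiring R] (Δ : Matrix ι ι R) (w0 : ι → R)

def katzStep (a : ι → R) : ι → R := (a ᵥ* Δ) * w0

variable {Δ w0} {v b : ℕ → ι → R}

theorem dotProduct_phase_succ (m : ℕ) (hv : v (m + 1) = Δ *ᵥ (w0 * v m + b (m + 1)))
    (a : ι → R) :
    a ⬝ᵥ v (m + 1) = katzStep Δ w0 a ⬝ᵥ v m + (a ᵥ* Δ) ⬝ᵥ b (m + 1) := by
  rw [hv, dotProduct_mulVec, dotProduct_add, dotProduct_hadamard_assoc, katzStep]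

theorem dotProduct_phase_eq (hv : ∀ m, v (m + 1) = Δ *ᵥ (w0 * v m + b (m + 1))) (m : ℕ)
    (a : ι → R) :
    a ⬝ᵥ v m = (katzStep Δ w0)^[m] a ⬝ᵥ v 0 +
      ∑ s ∈ Icc 1 m, ((katzStep Δ w0)^[m - s] a ᵥ* Δ) ⬝ᵥ b s := by
  induction m generalizing a with
  | zero => simp
  | succ m ih =>
    have hshift : ∀ s ∈ Icc 1 m,
        (katzStep Δ w0)^[m - s] (katzStep Δ w0 a) = (katzStep Δ w0)^[m + 1 - s] a := by
      intro s hs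
      rw [← Function.iterate_succ_apply, Nat.succ_eq_add_one,
        Nat.sub_add_comm (mem_Icc.mp hs).2]
    rw [dotProduct_phase_succ m (hv m), ih, sum_Icc_succ_top (Nat.le_add_left 1 m),
      Function.iterate_succ_apply, sum_congr rfl fun s hs => by rw [hshift s hs],
      Nat.sub_self, Function.iterate_zero_apply, add_assoc]

theorem iterate_katzStep_one_vecMul {r : ℕ → ι → R} (hr1 : r 1 = 1 ᵥ* Δ)
    (hrq : ∀ q, 1 ≤ q → r (q + 1) = (r q * w0) ᵥ* Δ) (k : ℕ) :
    (katzStep Δ w0)^[k] 1 ᵥ* Δ = r (k + 1) := by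
  induction k with
  | zero => exact hr1.symm
  | succ k ih =>
    rw [Function.iterate_succ_apply', katzStep, ih, hrq (k + 1) (Nat.le_add_left 1 k)]

end Matrix

theorem multiphase_opinion_sum_general (n : ℕ) (Δ : Matrix (Fin n) (Fin n) ℝ)
    (w0 wg wb v0 : Fin n → ℝ)
    (x y : ℕ → Fin n → ℝ)
    (r : ℕ → Fin n → ℝ)
    (hr1 : ∀ i, r 1 i = ∑ j, Δ j i)
    (hrq : ∀ q : ℕ, 1 ≤ q → ∀ i, r (q + 1) i = ∑ j, r q j * w0 j * Δ j i)
    (v : ℕ → Fin n → ℝ)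
    (hv0 : v 0 = v0)
    (hv : ∀ q : ℕ, v (q + 1) =
      Δ.mulVec (fun i => w0 i * v q i + wg i * x (q + 1) i - wb i * y (q + 1) i)) :
    ∀ p : ℕ, 1 ≤ p →
      ∑ i, v p i = ∑ i, r p i * w0 i * v0 i +
        ∑ q ∈ Finset.Icc 1 p, ∑ i, r (p - q + 1) i * (wg i * x q i - wb i * y q i) := by
  intro p hp
  obtain ⟨m, rfl⟩ := Nat.exists_eq_add_one_of_ne_zero (Nat.one_le_iff_ne_zero.mp hp)
  have hr1' : r 1 = 1 ᵥ* Δ := funext fun i => by simp [hr1, vecMul, dotProduct]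
  have hrq' : ∀ q, 1 ≤ q → r (q + 1) = (r q * w0) ᵥ* Δ := fun q hq => funext (hrq q hq)
  have hv' : ∀ q, v (q + 1) = Δ *ᵥ (w0 * v q + (wg * x (q + 1) - wb * y (q + 1))) :=
    fun q => by simp only [hv q, add_sub_assoc]; rfl
  have hcentrality := iterate_katzStep_one_vecMul hr1' hrq'
  rw [← one_dotProduct, dotProduct_phase_eq (b := fun q => wg * x q - wb * y q) hv' (m + 1), hv0, Function.iterate_succ_apply',
    katzStep, hcentrality]
  congr 1
  refine sum_congr rfl fun q _ => ?_
  rw [hcentrality]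
  rfl

/-- Multiphase opinion sum: with `Δ = (I − w)⁻¹`, `q`-phase Katz centralities
`r^(1) = Δᵀ𝟙`, `r^(q) = Δᵀ(r^(q−1) ∘ w⁰)`, and steady-state phase opinions
`v^(q) = Δ(w⁰ ∘ v^(q−1) + w_g ∘ x^(q) − w_b ∘ y^(q))` starting from `v^(0) = v⁰`,
for every `p ≥ 1`:
`∑ᵢ vᵢ^(p) = ∑ᵢ rᵢ^(p) w⁰ᵢ v⁰ᵢ + ∑_{q=1}^p ∑ᵢ rᵢ^(p−q+1) (w_{g,i} xᵢ^(q) − w_{b,i} yᵢ^(q))`. -/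
theorem multiphase_opinion_sum (n : ℕ) (w Δ : Matrix (Fin n) (Fin n) ℝ)
    (hinv : IsUnit (1 - w)) (hΔ : Δ = (1 - w)⁻¹)
    (w0 wg wb v0 : Fin n → ℝ)
    (x y : ℕ → Fin n → ℝ)
    (r : ℕ → Fin n → ℝ)
    (hr1 : ∀ i, r 1 i = ∑ j, Δ j i)
    (hrq : ∀ q : ℕ, 1 ≤ q → ∀ i, r (q + 1) i = ∑ j, r q j * w0 j * Δ j i)
    (v : ℕ → Fin n → ℝ)
    (hv0 : v 0 = v0)
    (hv : ∀ q : ℕ, v (q + 1) =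
      Δ.mulVec (fun i => w0 i * v q i + wg i * x (q + 1) i - wb i * y (q + 1) i)) :
    ∀ p : ℕ, 1 ≤ p →
      ∑ i, v p i = ∑ i, r p i * w0 i * v0 i +
        ∑ q ∈ Finset.Icc 1 p, ∑ i, r (p - q + 1) i * (wg i * x q i - wb i * y q i) :=
  multiphase_opinion_sum_general n Δ w0 wg wb v0 x y r hr1 hrq v hv0 hv
end

section
/- Let w be a real n×n matrix with I − w invertible, Δ = (I − w)^{-1}, r = Δᵀ𝟙, and s = Δᵀ(r ∘ w⁰) (so s_i = ∑_j r_j w⁰_j Δ_{ji}). With v^(1) = Δ(w⁰ ∘ v⁰ + w_g ∘ x^(1) − w_b ∘ y^(1)) and v^(2) = Δ(w⁰ ∘ v^(1) + w_g ∘ x^(2) − w_b ∘ y^(2)), one has ∑_i v_i^(2) = ∑_i s_i w⁰_i v⁰_i + ∑_i s_i w_{g,i} x_i^(1) − ∑_i s_i w_{b,i} y_i^(1) + ∑_i r_i w_{g,i} x_i^(2) − ∑_i r_i w_{b,i} y_i^(2). -/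
open Matrix Finset

theorem Matrix.sum_mul_mulVec {ι R : Type*} [Fintype ι] [CommSemiring R] (A : Matrix ι ι R)
    (c f : ι → R) : ∑ j, c j * (A *ᵥ f) j = ∑ k, (∑ j, c j * A j k) * f k := by
  simpa [dotProduct, vecMul] using dotProduct_mulVec c A f

theorem two_phase_opinion_sum_general (n : ℕ) (Δ : Matrix (Fin n) (Fin n) ℝ)
    (w0 wg wb v0 x1 x2 y1 y2 : Fin n → ℝ)
    (r s : Fin n → ℝ)
    (hr : ∀ i, r i = ∑ j, Δ j i)
    (hs : ∀ i, s i = ∑ j, r j * w0 j * Δ j i)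
    (v1 v2 : Fin n → ℝ)
    (hv1 : v1 = Δ.mulVec (fun i => w0 i * v0 i + wg i * x1 i - wb i * y1 i))
    (hv2 : v2 = Δ.mulVec (fun i => w0 i * v1 i + wg i * x2 i - wb i * y2 i)) :
    ∑ i, v2 i = ∑ i, s i * w0 i * v0 i + ∑ i, s i * wg i * x1 i - ∑ i, s i * wb i * y1 i
      + ∑ i, r i * wg i * x2 i - ∑ i, r i * wb i * y2 i := by
  have phase_two : ∑ i, v2 i = ∑ k, r k * (w0 k * v1 k + wg k * x2 k - wb k * y2 k) := by
    simpa [hv2, hr] using Δ.sum_mul_mulVec 1 (fun i => w0 i * v1 i + wg i * x2 i - wb i * y2 i)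
  have phase_one : ∑ k, r k * w0 k * v1 k
      = ∑ k, s k * (w0 k * v0 k + wg k * x1 k - wb k * y1 k) := by
    simpa [← hv1, hs] using Δ.sum_mul_mulVec (fun j => r j * w0 j)
      (fun i => w0 i * v0 i + wg i * x1 i - wb i * y1 i)
  rw [phase_two]
  simp only [mul_add, mul_sub, sum_add_distrib, sum_sub_distrib, ← mul_assoc] at phase_one ⊢
  linarith

/-- Two-phase opinion sum: with `Δ = (I − w)⁻¹`, `r = Δᵀ𝟙`, `s = Δᵀ(r ∘ w⁰)`, and
phase opinions `v^(1) = Δ(w⁰ ∘ v⁰ + w_g ∘ x^(1) − w_b ∘ y^(1))`,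
`v^(2) = Δ(w⁰ ∘ v^(1) + w_g ∘ x^(2) − w_b ∘ y^(2))`, one has
`∑ᵢ vᵢ^(2) = ∑ᵢ sᵢ w⁰ᵢ v⁰ᵢ + ∑ᵢ sᵢ w_{g,i} xᵢ^(1) − ∑ᵢ sᵢ w_{b,i} yᵢ^(1)
  + ∑ᵢ rᵢ w_{g,i} xᵢ^(2) − ∑ᵢ rᵢ w_{b,i} yᵢ^(2)`. -/
theorem two_phase_opinion_sum (n : ℕ) (w Δ : Matrix (Fin n) (Fin n) ℝ)
    (hinv : IsUnit (1 - w)) (hΔ : Δ = (1 - w)⁻¹)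
    (w0 wg wb v0 x1 x2 y1 y2 : Fin n → ℝ)
    (r s : Fin n → ℝ)
    (hr : ∀ i, r i = ∑ j, Δ j i)
    (hs : ∀ i, s i = ∑ j, r j * w0 j * Δ j i)
    (v1 v2 : Fin n → ℝ)
    (hv1 : v1 = Δ.mulVec (fun i => w0 i * v0 i + wg i * x1 i - wb i * y1 i))
    (hv2 : v2 = Δ.mulVec (fun i => w0 i * v1 i + wg i * x2 i - wb i * y2 i)) :
    ∑ i, v2 i = ∑ i, s i * w0 i * v0 i + ∑ i, s i * wg i * x1 i - ∑ i, s i * wb i * y1 i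
      + ∑ i, r i * wg i * x2 i - ∑ i, r i * wb i * y2 i :=
  two_phase_opinion_sum_general n Δ w0 wg wb v0 x1 x2 y1 y2 r s hr hs v1 v2 hv1 hv2
end

section
/- Let s, r, w_b ∈ ℝⁿ and k_b ≥ 0, and let î ∈ argmax_i r_i w_{b,i} with r_î w_{b,î} > 0 and s_î w_{b,î} ≥ 0. The myopic bad camp invests its entire budget k_b on node î in the first phase (y^(1) = k_b e_î, y^(2) = 0), whereas the farsighted bad camp chooses (y^(1), y^(2)) ≥ 0 with ∑_i (y_i^(1) + y_i^(2)) ≤ k_b to maximize ∑_i (s_i w_{b,i} y_i^(1) + r_i w_{b,i} y_i^(2)). The loss of the myopic camp, i.e., the difference between the farsighted maximum and the value achieved by the myopic strategy, equals k_b · ( max_i max(s_i w_{b,i}, r_i w_{b,i}, 0) − max(s_î w_{b,î}, 0) ). -/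
open Matrix BigOperators Finset

/-!
Both phases draw on one budget, so the bad camp's objective is a linear form on the simplex
`{y ≥ 0, ∑ y ≤ k_b}` of dimension `2n`. Its maximum is `k_b` times the largest coefficient
(or `0`, if no coefficient is positive), attained by spending everything on that coefficient.
The myopic strategy earns `k_b s_î w_{b,î}`, and `s_î w_{b,î} ≥ 0` lets us write this as
`k_b max(s_î w_{b,î}, 0)`.
-/

section TwoPhase

variable {ι : Type*} [Fintype ι] (a b : ι → ℝ) (k : ℝ)

def twoPhaseValues : Set ℝ :=
  {val | ∃ y1 y2 : ι → ℝ, (∀ i, 0 ≤ y1 i) ∧ (∀ i, 0 ≤ y2 i) ∧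
    (∑ i, (y1 i + y2 i)) ≤ k ∧ val = ∑ i, (a i * y1 i + b i * y2 i)}

theorem twoPhaseValues_le {M : ℝ} (haM : ∀ i, a i ≤ M) (hbM : ∀ i, b i ≤ M) (hM : 0 ≤ M) :
    ∀ val ∈ twoPhaseValues a b k, val ≤ k * M := by
  rintro val ⟨y1, y2, hy1, hy2, hbudget, rfl⟩
  calc ∑ i, (a i * y1 i + b i * y2 i)
      ≤ ∑ i, (M * y1 i + M * y2 i) := by
        gcongr with i
        exacts [hy1 i, haM i, hy2 i, hbM i]
    _ = M * ∑ i, (y1 i + y2 i) := by simp only [mul_sum, mul_add]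
    _ ≤ M * k := by gcongr
    _ = k * M := mul_comm M k

theorem zero_mem_twoPhaseValues (hk : 0 ≤ k) : 0 ∈ twoPhaseValues a b k :=
  ⟨0, 0, fun _ => le_rfl, fun _ => le_rfl, by simpa using hk, by simp⟩

variable [DecidableEq ι]

theorem sum_mul_single (c : ι → ℝ) (j : ι) (x : ℝ) :
    ∑ i, c i * (Pi.single j x : ι → ℝ) i = c j * x :=
  dotProduct_single c x j

theorem mul_mem_twoPhaseValues_left (hk : 0 ≤ k) (j : ι) : k * a j ∈ twoPhaseValues a b k := by
  refine ⟨Pi.single j k, 0, (Pi.single_nonneg (α := fun _ => ℝ)).2 hk, fun _ => le_rfl, ?_, ?_⟩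
  · simp
  · simp only [Pi.zero_apply, mul_zero, add_zero, sum_mul_single, mul_comm]

theorem mul_mem_twoPhaseValues_right (hk : 0 ≤ k) (j : ι) : k * b j ∈ twoPhaseValues a b k := by
  refine ⟨0, Pi.single j k, fun _ => le_rfl, (Pi.single_nonneg (α := fun _ => ℝ)).2 hk, ?_, ?_⟩
  · simp
  · simp only [Pi.zero_apply, mul_zero, zero_add, sum_mul_single, mul_comm]

theorem isGreatest_twoPhaseValues (hk : 0 ≤ k) (hι : (univ : Finset ι).Nonempty) :
    IsGreatest (twoPhaseValues a b k)
      (k * univ.sup' hι (fun i => max (max (a i) (b i)) 0)) := by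
  set f : ι → ℝ := fun i => max (max (a i) (b i)) 0
  have hf_le : ∀ i, f i ≤ univ.sup' hι f := fun i => le_sup' f (mem_univ i)
  obtain ⟨j, -, hj⟩ := exists_mem_eq_sup' hι f
  refine ⟨?_, twoPhaseValues_le a b k (fun i => ?_) (fun i => ?_) ?_⟩
  · rw [hj]
    rcases max_choice (max (a j) (b j)) 0 with h | h <;> simp only [f, h]
    · rcases max_choice (a j) (b j) with h' | h' <;> rw [h']
      · exact mul_mem_twoPhaseValues_left a b k hk j
      · exact mul_mem_twoPhaseValues_right a b k hk j
    · simpa using zero_mem_twoPhaseValues a b k hk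
  · exact (le_max_left _ _).trans ((le_max_left _ _).trans (hf_le i))
  · exact (le_max_right _ _).trans ((le_max_left _ _).trans (hf_le i))
  · exact (le_max_right _ _).trans (hf_le j)

end TwoPhase

theorem myopic_loss_general (n : ℕ) (hn : 0 < n) (s r wb : Fin n → ℝ) (kb : ℝ) (hkb : 0 ≤ kb)
    (ihat : Fin n)
    (hs : 0 ≤ s ihat * wb ihat) :
    IsGreatest
      {val : ℝ | ∃ y1 y2 : Fin n → ℝ, (∀ i, 0 ≤ y1 i) ∧ (∀ i, 0 ≤ y2 i) ∧
        (∑ i, (y1 i + y2 i)) ≤ kb ∧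
        val = ∑ i, (s i * wb i * y1 i + r i * wb i * y2 i)}
      (kb * Finset.univ.sup' ⟨⟨0, hn⟩, Finset.mem_univ _⟩
        (fun i => max (max (s i * wb i) (r i * wb i)) 0)) ∧
    (kb * Finset.univ.sup' ⟨⟨0, hn⟩, Finset.mem_univ _⟩
        (fun i => max (max (s i * wb i) (r i * wb i)) 0))
      - (∑ i, (s i * wb i * (Pi.single ihat kb : Fin n → ℝ) i + r i * wb i * (0 : ℝ))) =
      kb * ((Finset.univ.sup' ⟨⟨0, hn⟩, Finset.mem_univ _⟩
        (fun i => max (max (s i * wb i) (r i * wb i)) 0)) - max (s ihat * wb ihat) 0) := by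
  refine ⟨isGreatest_twoPhaseValues (fun i => s i * wb i) (fun i => r i * wb i) kb hkb _, ?_⟩
  have hmyopic : ∑ i, (s i * wb i * (Pi.single ihat kb : Fin n → ℝ) i + r i * wb i * (0 : ℝ)) =
      s ihat * wb ihat * kb := by
    simpa only [mul_zero, add_zero] using sum_mul_single (fun i => s i * wb i) ihat kb
  rw [hmyopic, max_eq_left hs]
  ring

/-- Loss of the myopic bad camp: the farsighted maximum of
`∑ᵢ (sᵢ w_{b,i} yᵢ^(1) + rᵢ w_{b,i} yᵢ^(2))` over nonnegative investments of total at most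
`k_b` equals `k_b · maxᵢ max(sᵢ w_{b,i}, rᵢ w_{b,i}, 0)`, and its difference with the value
achieved by the myopic strategy `y^(1) = k_b e_î`, `y^(2) = 0` equals
`k_b · (maxᵢ max(sᵢ w_{b,i}, rᵢ w_{b,i}, 0) − max(s_î w_{b,î}, 0))`. -/
theorem myopic_loss (n : ℕ) (hn : 0 < n) (s r wb : Fin n → ℝ) (kb : ℝ) (hkb : 0 ≤ kb)
    (ihat : Fin n)
    (hargmax : ∀ i, r i * wb i ≤ r ihat * wb ihat)
    (hpos : 0 < r ihat * wb ihat)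
    (hs : 0 ≤ s ihat * wb ihat) :
    IsGreatest
      {val : ℝ | ∃ y1 y2 : Fin n → ℝ, (∀ i, 0 ≤ y1 i) ∧ (∀ i, 0 ≤ y2 i) ∧
        (∑ i, (y1 i + y2 i)) ≤ kb ∧
        val = ∑ i, (s i * wb i * y1 i + r i * wb i * y2 i)}
      (kb * Finset.univ.sup' ⟨⟨0, hn⟩, Finset.mem_univ _⟩
        (fun i => max (max (s i * wb i) (r i * wb i)) 0)) ∧
    (kb * Finset.univ.sup' ⟨⟨0, hn⟩, Finset.mem_univ _⟩
        (fun i => max (max (s i * wb i) (r i * wb i)) 0))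
      - (∑ i, (s i * wb i * (Pi.single ihat kb : Fin n → ℝ) i + r i * wb i * (0 : ℝ))) =
      kb * ((Finset.univ.sup' ⟨⟨0, hn⟩, Finset.mem_univ _⟩
        (fun i => max (max (s i * wb i) (r i * wb i)) 0)) - max (s ihat * wb ihat) 0) :=
  myopic_loss_general n hn s r wb kb hkb ihat hs
end

section
/- Let w be a real n×n matrix with I − w invertible, Δ = (I − w)^{-1}, r = Δᵀ𝟙, and let w⁰, θ, v⁰ ∈ ℝⁿ. Set b_{ji} = r_j w⁰_j Δ_{ji} and c_i = w⁰_i v⁰_i. Define the phase-dependent good-camp weights w_{g,i}^{(p)} = (θ_i/2)(1 + w⁰_i v_i^{(p−1)}), with v^(0) = v⁰, v^(1) = Δ(w⁰ ∘ v⁰ + w_g^{(1)} ∘ x^(1)), and v^(2) = Δ(w⁰ ∘ v^(1) + w_g^{(2)} ∘ x^(2)) (single camp, no bad-camp investment). Then ∑_i v_i^(2) = ∑_i ∑_j ( c_i + (θ_i/2) x_i^(1) (c_i + 1) ) · b_{ji} · ( 1 + (θ_j/2) x_j^(2) ) + ∑_j r_j (θ_j/2) x_j^(2). -/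
open Matrix BigOperators Finset

/-!
Summing the opinions of a phase is the linear functional `𝟙ᵀΔ = rᵀ`, so `∑ᵢ vᵢ^(2) = r ⬝ᵥ u`
with `u` the phase-2 input. Since `w_g^{(2)} ∘ x^(2) = (θ/2) ∘ x^(2) ∘ (1 + w⁰ ∘ v^(1))`, the input
`u` splits as `(w⁰ ∘ v^(1)) ∘ (1 + (θ/2) ∘ x^(2)) + (θ/2) ∘ x^(2)`; substituting
`v^(1) = Δ (c + (θ/2) ∘ x^(1) ∘ (c + 1))` into the first part produces the matrix `b`.
-/

theorem Matrix.sum_mulVec_eq_vecMul_dotProduct {m n R : Type*} [Fintype m] [Fintype n]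
    [Semiring R] (A : Matrix m n R) (x : n → R) : ∑ i, (A *ᵥ x) i = (1 ᵥ* A) ⬝ᵥ x := by
  rw [← one_dotProduct, dotProduct_mulVec]

theorem dependency_single_camp_objective_general (n : ℕ) (Δ : Matrix (Fin n) (Fin n) ℝ)
    (w0 θ v0 x1 x2 : Fin n → ℝ)
    (r : Fin n → ℝ) (hr : ∀ i, r i = ∑ j, Δ j i)
    (b : Matrix (Fin n) (Fin n) ℝ) (hb : ∀ j i, b j i = r j * w0 j * Δ j i)
    (c : Fin n → ℝ) (hc : ∀ i, c i = w0 i * v0 i)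
    (v1 v2 : Fin n → ℝ)
    (hv1 : v1 = Δ.mulVec (fun i => w0 i * v0 i + (θ i / 2 * (1 + w0 i * v0 i)) * x1 i))
    (hv2 : v2 = Δ.mulVec (fun i => w0 i * v1 i + (θ i / 2 * (1 + w0 i * v1 i)) * x2 i)) :
    ∑ i, v2 i =
      (∑ i, ∑ j, (c i + θ i / 2 * x1 i * (c i + 1)) * (b j i * (1 + θ j / 2 * x2 j)))
        + ∑ j, r j * (θ j / 2) * x2 j := by
  have hrΔ : 1 ᵥ* Δ = r := funext fun i => by simp [vecMul, dotProduct, hr]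
  have hv1' : ∀ j, v1 j = ∑ i, Δ j i * (c i + θ i / 2 * x1 i * (c i + 1)) := fun j => by
    simp only [hv1, mulVec, dotProduct, hc]
    exact sum_congr rfl fun i _ => by ring
  calc ∑ i, v2 i
      = ∑ j, r j * (w0 j * v1 j + θ j / 2 * (1 + w0 j * v1 j) * x2 j) := by
        rw [hv2, sum_mulVec_eq_vecMul_dotProduct, hrΔ, dotProduct]
    _ = ∑ j, r j * w0 j * v1 j * (1 + θ j / 2 * x2 j) + ∑ j, r j * (θ j / 2) * x2 j := by
        rw [← sum_add_distrib]
        exact sum_congr rfl fun j _ => by ring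
    _ = _ := by
        rw [sum_comm]
        congr 1
        refine sum_congr rfl fun j _ => ?_
        rw [hv1', mul_sum, sum_mul]
        exact sum_congr rfl fun i _ => by rw [hb]; ring

/-- Single-camp two-phase objective in the dependency setting: with `Δ = (I − w)⁻¹`,
`r = Δᵀ𝟙`, `b_{ji} = r_j w⁰_j Δ_{ji}`, `c_i = w⁰_i v⁰_i`, phase-dependent weights
`w_{g,i}^{(p)} = (θᵢ/2)(1 + w⁰ᵢ vᵢ^{(p−1)})`, and phase opinions
`v^(1) = Δ(w⁰ ∘ v⁰ + w_g^{(1)} ∘ x^(1))`, `v^(2) = Δ(w⁰ ∘ v^(1) + w_g^{(2)} ∘ x^(2))`,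
one has `∑ᵢ vᵢ^(2) = ∑ᵢ∑ⱼ (cᵢ + (θᵢ/2) xᵢ^(1) (cᵢ+1)) b_{ji} (1 + (θⱼ/2) xⱼ^(2))
  + ∑ⱼ rⱼ (θⱼ/2) xⱼ^(2)`. -/
theorem dependency_single_camp_objective (n : ℕ) (w Δ : Matrix (Fin n) (Fin n) ℝ)
    (hinv : IsUnit (1 - w)) (hΔ : Δ = (1 - w)⁻¹)
    (w0 θ v0 x1 x2 : Fin n → ℝ)
    (r : Fin n → ℝ) (hr : ∀ i, r i = ∑ j, Δ j i)
    (b : Matrix (Fin n) (Fin n) ℝ) (hb : ∀ j i, b j i = r j * w0 j * Δ j i)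
    (c : Fin n → ℝ) (hc : ∀ i, c i = w0 i * v0 i)
    (v1 v2 : Fin n → ℝ)
    (hv1 : v1 = Δ.mulVec (fun i => w0 i * v0 i + (θ i / 2 * (1 + w0 i * v0 i)) * x1 i))
    (hv2 : v2 = Δ.mulVec (fun i => w0 i * v1 i + (θ i / 2 * (1 + w0 i * v1 i)) * x2 i)) :
    ∑ i, v2 i =
      (∑ i, ∑ j, (c i + θ i / 2 * x1 i * (c i + 1)) * (b j i * (1 + θ j / 2 * x2 j)))
        + ∑ j, r j * (θ j / 2) * x2 j :=
  dependency_single_camp_objective_general n Δ w0 θ v0 x1 x2 r hr b hb c hc v1 v2 hv1 hv2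
end

section
/- Let b be a real n×n matrix and c, θ, r ∈ ℝⁿ, k_g ≥ 0, and define f(x^(1), x^(2)) = ∑_i ∑_j ( c_i + (θ_i/2) x_i^(1) (c_i + 1) ) · b_{ji} · ( 1 + (θ_j/2) x_j^(2) ) + ∑_j r_j (θ_j/2) x_j^(2) on the compact feasible set K = { (x^(1), x^(2)) : x^(1), x^(2) ≥ 0 componentwise, ∑_i (x_i^(1) + x_i^(2)) ≤ k_g }. Then there exists a maximizer (x^(1)*, x^(2)*) of f over K such that x^(1)* has at most one nonzero coordinate, x^(2)* has at most one nonzero coordinate, and either ∑_i (x_i^(1)* + x_i^(2)*) = k_g or x^(1)* = x^(2)* = 0. -/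
open Matrix BigOperators Finset

/-! For fixed second-phase investment the objective is affine in the first-phase investment, and
vice versa. An affine function on the budget simplex `{x ≥ 0, ∑ x ≤ B}` is maximised at a vertex,
i.e. at `0` or at `B` placed on a single node. Start from a global maximiser, which exists by
compactness; replace the first phase by a vertex of the simplex the second phase leaves over, then
the second phase by a vertex of what the new first phase leaves over. Neither step lowers the
value. If the second phase ends at `0`, re-optimise the first phase over the whole budget. -/

section

def budgetSimplex (ι : Type*) [Fintype ι] (B : ℝ) : Set (ι → ℝ) := {x | 0 ≤ x ∧ ∑ i, x i ≤ B}

def pairBudgetSet (ι : Type*) [Fintype ι] (B : ℝ) : Set ((ι → ℝ) × (ι → ℝ)) :=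
  {p | 0 ≤ p.1 ∧ 0 ≤ p.2 ∧ ∑ i, (p.1 i + p.2 i) ≤ B}

variable {ι : Type*} [Fintype ι]

theorem exists_sparse_isMaxOn_budgetSimplex {g : (ι → ℝ) → ℝ} {a : ι → ℝ}
    (hg : ∀ x, g x = g 0 + a ⬝ᵥ x) {B : ℝ} (hB : 0 ≤ B) :
    ∃ x ∈ budgetSimplex ι B, (Function.support x).Subsingleton ∧ (∑ i, x i = B ∨ x = 0) ∧
      IsMaxOn g (budgetSimplex ι B) x := by
  classical
  by_cases ha : ∃ i, 0 ≤ a i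
  · obtain ⟨i, hi⟩ := ha
    obtain ⟨i₀, -, hi₀⟩ := exists_max_image univ a ⟨i, mem_univ i⟩
    refine ⟨Pi.single i₀ B, ⟨Pi.single_nonneg.2 hB, by simp⟩,
      Set.subsingleton_singleton.anti Pi.support_single_subset, Or.inl (by simp),
      fun z ⟨hz, hzB⟩ => ?_⟩
    show g z ≤ g (Pi.single i₀ B)
    rw [hg z, hg (Pi.single i₀ B), dotProduct_single]
    gcongr
    calc a ⬝ᵥ z ≤ ∑ i, a i₀ * z i :=
          sum_le_sum fun i _ => by gcongr; exacts [hz i, hi₀ i (mem_univ i)]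
      _ = a i₀ * ∑ i, z i := (mul_sum ..).symm
      _ ≤ a i₀ * B := by gcongr; exact hi.trans (hi₀ i (mem_univ i))
  · simp only [not_exists, not_le] at ha
    refine ⟨0, ⟨le_rfl, by simpa using hB⟩, by simp, Or.inr rfl, fun z ⟨hz, _⟩ => ?_⟩
    show g z ≤ g 0
    rw [hg z]
    exact add_le_of_nonpos_right <|
      sum_nonpos fun i _ => mul_nonpos_of_nonpos_of_nonneg (ha i).le (hz i)

theorem nonneg_of_mem_budgetSimplex {B : ℝ} {x : ι → ℝ} (hx : x ∈ budgetSimplex ι B) : 0 ≤ B :=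
  (sum_nonneg fun i _ => hx.1 i).trans hx.2

theorem mk_mem_pairBudgetSet_iff_fst {B : ℝ} {x₁ x₂ : ι → ℝ} :
    (x₁, x₂) ∈ pairBudgetSet ι B ↔ x₁ ∈ budgetSimplex ι (B - ∑ i, x₂ i) ∧ 0 ≤ x₂ := by
  simp only [pairBudgetSet, budgetSimplex, Set.mem_ofPred_eq, sum_add_distrib, le_sub_iff_add_le]
  tauto

theorem mk_mem_pairBudgetSet_iff_snd {B : ℝ} {x₁ x₂ : ι → ℝ} :
    (x₁, x₂) ∈ pairBudgetSet ι B ↔ 0 ≤ x₁ ∧ x₂ ∈ budgetSimplex ι (B - ∑ i, x₁ i) := by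
  simp only [pairBudgetSet, budgetSimplex, Set.mem_ofPred_eq, sum_add_distrib, le_sub_iff_add_le']

theorem isCompact_pairBudgetSet (B : ℝ) : IsCompact (pairBudgetSet ι B) := by
  refine isCompact_Icc (a := (0, 0)) (b := (fun _ => B, fun _ => B)) |>.of_isClosed_subset
    ((isClosed_le continuous_const continuous_fst).inter
      ((isClosed_le continuous_const continuous_snd).inter
        (isClosed_le (f := fun p : (ι → ℝ) × (ι → ℝ) => ∑ i, (p.1 i + p.2 i)) (by fun_prop)
          continuous_const))) ?_
  rintro ⟨x₁, x₂⟩ ⟨h₁, h₂, hB⟩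
  have hle : ∀ i, x₁ i + x₂ i ≤ B := fun i =>
    (single_le_sum (fun j _ => add_nonneg (h₁ j) (h₂ j)) (mem_univ i)).trans hB
  exact ⟨⟨h₁, h₂⟩, fun i => le_of_add_le_of_nonneg_left (hle i) (h₂ i),
    fun i => le_of_add_le_of_nonneg_right (hle i) (h₁ i)⟩

section Biaffine

variable {f : (ι → ℝ) → (ι → ℝ) → ℝ}

theorem exists_sparse_le_of_mem_pairBudgetSet
    (hf₁ : ∀ y, ∃ a : ι → ℝ, ∀ x, f x y = f 0 y + a ⬝ᵥ x)
    (hf₂ : ∀ x, ∃ a : ι → ℝ, ∀ y, f x y = f x 0 + a ⬝ᵥ y) {B : ℝ} {y₁ y₂ : ι → ℝ}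
    (hy : (y₁, y₂) ∈ pairBudgetSet ι B) :
    ∃ x₁ x₂, (x₁, x₂) ∈ pairBudgetSet ι B ∧ (Function.support x₁).Subsingleton ∧
      (Function.support x₂).Subsingleton ∧ (∑ i, (x₁ i + x₂ i) = B ∨ x₁ = 0 ∧ x₂ = 0) ∧
      f y₁ y₂ ≤ f x₁ x₂ := by
  obtain ⟨hy₁, hy₂⟩ := mk_mem_pairBudgetSet_iff_fst.1 hy
  obtain ⟨a₁, ha₁⟩ := hf₁ y₂
  obtain ⟨x₁, hx₁, hs₁, -, hm₁⟩ :=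
    exists_sparse_isMaxOn_budgetSimplex ha₁ (nonneg_of_mem_budgetSimplex hy₁)
  have hy₂' : y₂ ∈ budgetSimplex ι (B - ∑ i, x₁ i) :=
    (mk_mem_pairBudgetSet_iff_snd.1 (mk_mem_pairBudgetSet_iff_fst.2 ⟨hx₁, hy₂⟩)).2
  obtain ⟨a₂, ha₂⟩ := hf₂ x₁
  obtain ⟨x₂, hx₂, hs₂, he₂, hm₂⟩ :=
    exists_sparse_isMaxOn_budgetSimplex ha₂ (nonneg_of_mem_budgetSimplex hy₂')
  have hx : (x₁, x₂) ∈ pairBudgetSet ι B := mk_mem_pairBudgetSet_iff_snd.2 ⟨hx₁.1, hx₂⟩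
  have hle : f y₁ y₂ ≤ f x₁ x₂ := (hm₁ hy₁).trans (hm₂ hy₂')
  rcases he₂ with he₂ | rfl
  · exact ⟨x₁, x₂, hx, hs₁, hs₂, Or.inl (by rw [sum_add_distrib, he₂]; ring), hle⟩
  · have hx₁' : x₁ ∈ budgetSimplex ι B := by simpa using (mk_mem_pairBudgetSet_iff_fst.1 hx).1
    obtain ⟨a₀, ha₀⟩ := hf₁ 0
    obtain ⟨w, hw, hs, he, hm⟩ :=
      exists_sparse_isMaxOn_budgetSimplex ha₀ (nonneg_of_mem_budgetSimplex hx₁')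
    refine ⟨w, 0, mk_mem_pairBudgetSet_iff_fst.2 ⟨by simpa using hw, le_rfl⟩, hs, by simp, ?_,
      hle.trans (hm hx₁')⟩
    simpa using he

theorem exists_sparse_isMaxOn_pairBudgetSet
    (hf₁ : ∀ y, ∃ a : ι → ℝ, ∀ x, f x y = f 0 y + a ⬝ᵥ x)
    (hf₂ : ∀ x, ∃ a : ι → ℝ, ∀ y, f x y = f x 0 + a ⬝ᵥ y)
    (hf : Continuous fun p : (ι → ℝ) × (ι → ℝ) => f p.1 p.2) {B : ℝ} (hB : 0 ≤ B) :
    ∃ x₁ x₂, (x₁, x₂) ∈ pairBudgetSet ι B ∧ (Function.support x₁).Subsingleton ∧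
      (Function.support x₂).Subsingleton ∧ (∑ i, (x₁ i + x₂ i) = B ∨ x₁ = 0 ∧ x₂ = 0) ∧
      IsMaxOn (fun p => f p.1 p.2) (pairBudgetSet ι B) (x₁, x₂) := by
  obtain ⟨y, hy, hmax⟩ := (isCompact_pairBudgetSet B).exists_isMaxOn
    ⟨0, le_rfl, le_rfl, by simpa using hB⟩ hf.continuousOn
  obtain ⟨x₁, x₂, hx, hs₁, hs₂, hB', hle⟩ := exists_sparse_le_of_mem_pairBudgetSet hf₁ hf₂ hy
  exact ⟨x₁, x₂, hx, hs₁, hs₂, hB', fun z hz => (hmax hz).trans hle⟩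

end Biaffine

section Objective

noncomputable def dependencyObjective (b : Matrix ι ι ℝ) (c θ r z₁ z₂ : ι → ℝ) : ℝ :=
  (∑ i, ∑ j, (c i + θ i / 2 * z₁ i * (c i + 1)) * (b j i * (1 + θ j / 2 * z₂ j)))
    + ∑ j, r j * (θ j / 2) * z₂ j

variable (b : Matrix ι ι ℝ) (c θ r : ι → ℝ)

theorem dependencyObjective_eq_left (z₁ z₂ : ι → ℝ) :
    dependencyObjective b c θ r z₁ z₂ = dependencyObjective b c θ r 0 z₂ +
      (fun i => θ i / 2 * (c i + 1) * ∑ j, b j i * (1 + θ j / 2 * z₂ j)) ⬝ᵥ z₁ := by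
  rw [← sub_eq_iff_eq_add', dependencyObjective, dependencyObjective, add_sub_add_right_eq_sub,
    ← sum_sub_distrib, dotProduct]
  refine sum_congr rfl fun i _ => ?_
  rw [← sum_sub_distrib, mul_sum, sum_mul]
  exact sum_congr rfl fun j _ => by simp only [Pi.zero_apply]; ring

theorem dependencyObjective_eq_right (z₁ z₂ : ι → ℝ) :
    dependencyObjective b c θ r z₁ z₂ = dependencyObjective b c θ r z₁ 0 +
      (fun j => θ j / 2 * (∑ i, (c i + θ i / 2 * z₁ i * (c i + 1)) * b j i + r j)) ⬝ᵥ z₂ := by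
  rw [← sub_eq_iff_eq_add', dependencyObjective, dependencyObjective, add_sub_add_comm]
  simp only [← sum_sub_distrib]
  rw [sum_comm, ← sum_add_distrib, dotProduct]
  refine sum_congr rfl fun j _ => ?_
  rw [mul_add, add_mul, mul_sum, sum_mul]
  exact congrArg₂ (· + ·) (sum_congr rfl fun i _ => by simp only [Pi.zero_apply]; ring)
    (by simp only [Pi.zero_apply]; ring)

theorem continuous_dependencyObjective :
    Continuous fun p : (ι → ℝ) × (ι → ℝ) => dependencyObjective b c θ r p.1 p.2 := by
  unfold dependencyObjective; fun_prop

end Objective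

end

/-- Lemma 1 of the paper (single camp, dependency setting): the bilinear objective
`f(x^(1),x^(2)) = ∑ᵢ∑ⱼ (cᵢ + (θᵢ/2) xᵢ^(1) (cᵢ+1)) b_{ji} (1 + (θⱼ/2) xⱼ^(2))
  + ∑ⱼ rⱼ (θⱼ/2) xⱼ^(2)` has a maximizer over the budget simplex that invests on at most
one node per phase, and either exhausts the budget or invests nothing. -/
theorem dependency_single_camp_structure (n : ℕ) (b : Matrix (Fin n) (Fin n) ℝ)
    (c θ r : Fin n → ℝ) (kg : ℝ) (hkg : 0 ≤ kg) :
    ∃ x1 x2 : Fin n → ℝ,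
      ((∀ i, 0 ≤ x1 i) ∧ (∀ i, 0 ≤ x2 i) ∧ (∑ i, (x1 i + x2 i)) ≤ kg) ∧
      (∀ z1 z2 : Fin n → ℝ, (∀ i, 0 ≤ z1 i) → (∀ i, 0 ≤ z2 i) →
        (∑ i, (z1 i + z2 i)) ≤ kg →
        (∑ i, ∑ j, (c i + θ i / 2 * z1 i * (c i + 1)) * (b j i * (1 + θ j / 2 * z2 j)))
            + ∑ j, r j * (θ j / 2) * z2 j ≤
          (∑ i, ∑ j, (c i + θ i / 2 * x1 i * (c i + 1)) * (b j i * (1 + θ j / 2 * x2 j)))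
            + ∑ j, r j * (θ j / 2) * x2 j) ∧
      (∀ i j, x1 i ≠ 0 → x1 j ≠ 0 → i = j) ∧
      (∀ i j, x2 i ≠ 0 → x2 j ≠ 0 → i = j) ∧
      ((∑ i, (x1 i + x2 i)) = kg ∨ (x1 = 0 ∧ x2 = 0)) := by
  obtain ⟨x₁, x₂, hx, hs₁, hs₂, he, hmax⟩ :=
    exists_sparse_isMaxOn_pairBudgetSet (f := dependencyObjective b c θ r)
      (fun z₂ => ⟨_, (dependencyObjective_eq_left b c θ r · z₂)⟩)
      (fun z₁ => ⟨_, dependencyObjective_eq_right b c θ r z₁⟩)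
      (continuous_dependencyObjective b c θ r) hkg
  refine ⟨x₁, x₂, hx, fun z₁ z₂ hz₁ hz₂ hz => ?_, fun _ _ hi hj => hs₁ hi hj,
    fun _ _ hi hj => hs₂ hi hj, he⟩
  exact hmax (a := (z₁, z₂)) ⟨hz₁, hz₂, hz⟩
end

section
/- Fix nodes α, β, γ, δ, reals θ_α, θ_β, θ_γ, θ_δ ≥ 0, b_{βα}, b_{δα}, b_{βγ}, b_{δγ} ≥ 0, c_α, c_γ ∈ [−1, 1], budgets k_g, k_b ≥ 0, and arbitrary reals s_α, s_γ, A_β, A_δ. Define h(a, e) = C + (k_g − a)(θ_β/2) A_β + (k_b − e)(θ_δ/2) A_δ + a (θ_α/2)(1 + c_α)( s_α + (k_g − a)(θ_β/2) b_{βα} + (k_b − e)(θ_δ/2) b_{δα} ) − e (θ_γ/2)(1 − c_γ)( s_γ + (k_g − a)(θ_β/2) b_{βγ} + (k_b − e)(θ_δ/2) b_{δγ} ) for (a, e) ∈ [0, k_g] × [0, k_b], where C is a constant. Then for each fixed e, the function a ↦ h(a, e) is concave on [0, k_g], and for each fixed a, the function e ↦ h(a, e) is convex on [0, k_b]. -/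
/-!
For fixed `e`, `h` is a quadratic polynomial in `a` with leading coefficient
`-(θα/2)(1 + cα)(θβ/2) bβα ≤ 0`; for fixed `a`, it is a quadratic polynomial in `e` with leading
coefficient `(θγ/2)(1 - cγ)(θδ/2) bδγ ≥ 0`. A real quadratic is convex or concave according to
the sign of its leading coefficient.
-/

/-- The hypothesis `hf` says that `f` is a quadratic polynomial with leading coefficient `p`. -/
theorem convexOn_of_interpolation_eq {s : Set ℝ} (hs : Convex ℝ s) {f : ℝ → ℝ} {p : ℝ}
    (hp : 0 ≤ p)
    (hf : ∀ x y t, f ((1 - t) * x + t * y) = (1 - t) * f x + t * f y - p * t * (1 - t) * (x - y) ^ 2) :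
    ConvexOn ℝ s f := by
  refine ⟨hs, fun x _ y _ a b ha hb hab => ?_⟩
  obtain rfl : a = 1 - b := by linarith
  simp only [smul_eq_mul, hf]
  linarith [mul_nonneg (mul_nonneg (mul_nonneg hp hb) ha) (sq_nonneg (x - y))]

theorem concaveOn_of_interpolation_eq {s : Set ℝ} (hs : Convex ℝ s) {f : ℝ → ℝ} {p : ℝ}
    (hp : p ≤ 0)
    (hf : ∀ x y t, f ((1 - t) * x + t * y) = (1 - t) * f x + t * f y - p * t * (1 - t) * (x - y) ^ 2) :
    ConcaveOn ℝ s f :=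
  neg_convexOn_iff.1 <| convexOn_of_interpolation_eq hs (neg_nonneg.2 hp) fun x y t => by
    simp only [Pi.neg_apply, hf]
    ring

theorem budget_split_concave_convex_general
    (θα θβ θγ θδ bβα bδα bβγ bδγ cα cγ kg kb sα sγ Aβ Aδ C : ℝ)
    (hθα : 0 ≤ θα) (hθβ : 0 ≤ θβ) (hθγ : 0 ≤ θγ) (hθδ : 0 ≤ θδ)
    (hbβα : 0 ≤ bβα) (hbδγ : 0 ≤ bδγ)
    (hcα : cα ∈ Set.Icc (-1 : ℝ) 1) (hcγ : cγ ∈ Set.Icc (-1 : ℝ) 1) :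
    (∀ e ∈ Set.Icc (0 : ℝ) kb,
      ConcaveOn ℝ (Set.Icc (0 : ℝ) kg) (fun a =>
        C + (kg - a) * (θβ / 2) * Aβ + (kb - e) * (θδ / 2) * Aδ
          + a * (θα / 2) * (1 + cα) *
              (sα + (kg - a) * (θβ / 2) * bβα + (kb - e) * (θδ / 2) * bδα)
          - e * (θγ / 2) * (1 - cγ) *
              (sγ + (kg - a) * (θβ / 2) * bβγ + (kb - e) * (θδ / 2) * bδγ))) ∧
    (∀ a ∈ Set.Icc (0 : ℝ) kg,
      ConvexOn ℝ (Set.Icc (0 : ℝ) kb) (fun e =>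
        C + (kg - a) * (θβ / 2) * Aβ + (kb - e) * (θδ / 2) * Aδ
          + a * (θα / 2) * (1 + cα) *
              (sα + (kg - a) * (θβ / 2) * bβα + (kb - e) * (θδ / 2) * bδα)
          - e * (θγ / 2) * (1 - cγ) *
              (sγ + (kg - a) * (θβ / 2) * bβγ + (kb - e) * (θδ / 2) * bδγ))) := by
  have hα : 0 ≤ θα / 2 * (1 + cα) * (θβ / 2 * bβα) :=
    mul_nonneg (mul_nonneg (by positivity) (by linarith [hcα.1])) (by positivity)
  have hγ : 0 ≤ θγ / 2 * (1 - cγ) * (θδ / 2 * bδγ) :=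
    mul_nonneg (mul_nonneg (by positivity) (by linarith [hcγ.2])) (by positivity)
  refine ⟨fun e _ => concaveOn_of_interpolation_eq (convex_Icc 0 kg) (neg_nonpos.2 hα) ?_,
    fun a _ => convexOn_of_interpolation_eq (convex_Icc 0 kb) hγ ?_⟩ <;>
  · intro x y t
    ring

/-- Concave-convex structure of the two-camp budget-split objective: for nonnegative
`θ`'s and `b`'s and `c_α, c_γ ∈ [−1, 1]`, the function `h(a, e)` is concave in the good
camp's first-phase budget `a ∈ [0, k_g]` for each fixed `e ∈ [0, k_b]`, and convex in the
bad camp's first-phase budget `e ∈ [0, k_b]` for each fixed `a ∈ [0, k_g]`. -/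
theorem budget_split_concave_convex
    (θα θβ θγ θδ bβα bδα bβγ bδγ cα cγ kg kb sα sγ Aβ Aδ C : ℝ)
    (hθα : 0 ≤ θα) (hθβ : 0 ≤ θβ) (hθγ : 0 ≤ θγ) (hθδ : 0 ≤ θδ)
    (hbβα : 0 ≤ bβα) (hbδα : 0 ≤ bδα) (hbβγ : 0 ≤ bβγ) (hbδγ : 0 ≤ bδγ)
    (hcα : cα ∈ Set.Icc (-1 : ℝ) 1) (hcγ : cγ ∈ Set.Icc (-1 : ℝ) 1)
    (hkg : 0 ≤ kg) (hkb : 0 ≤ kb) :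
    (∀ e ∈ Set.Icc (0 : ℝ) kb,
      ConcaveOn ℝ (Set.Icc (0 : ℝ) kg) (fun a =>
        C + (kg - a) * (θβ / 2) * Aβ + (kb - e) * (θδ / 2) * Aδ
          + a * (θα / 2) * (1 + cα) *
              (sα + (kg - a) * (θβ / 2) * bβα + (kb - e) * (θδ / 2) * bδα)
          - e * (θγ / 2) * (1 - cγ) *
              (sγ + (kg - a) * (θβ / 2) * bβγ + (kb - e) * (θδ / 2) * bδγ))) ∧
    (∀ a ∈ Set.Icc (0 : ℝ) kg,
      ConvexOn ℝ (Set.Icc (0 : ℝ) kb) (fun e =>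
        C + (kg - a) * (θβ / 2) * Aβ + (kb - e) * (θδ / 2) * Aδ
          + a * (θα / 2) * (1 + cα) *
              (sα + (kg - a) * (θβ / 2) * bβα + (kb - e) * (θδ / 2) * bδα)
          - e * (θγ / 2) * (1 - cγ) *
              (sγ + (kg - a) * (θβ / 2) * bβγ + (kb - e) * (θδ / 2) * bδγ))) :=
  budget_split_concave_convex_general θα θβ θγ θδ bβα bδα bβγ bδγ cα cγ kg kb sα sγ Aβ Aδ C hθα hθβ
    hθγ hθδ hbβα hbδγ hcα hcγ
end
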